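/- Let Φ be a continuous flow on a compact metric space X, let g be a jointly continuous cocycle for Φ, and fix T ≥ 1, δ > 0. Suppose that g(x,t) < −1/2 whenever x lies in a flow-invariant set C, t ≥ T, and d(x, x·t) < δ (i.e., along (δ,T)-cycles). Let y_1,...,y_k ∈ X be centers of open δ/2-balls covering X, and let M bound |g(x,t)| for all x ∈ X and 0 ≤ t ≤ T. Then for every x ∈ C and t ≥ 0, g(x,t) < (2k−1)M + 1/2 − (⌊t/T⌋ + 1 − k)/(2k); consequently g(x,t) ≤ −μt + ν with μ = 1/(2kT) and ν = (2k−1)M + 1/2. -/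

import Mathlib

/-!
Sample the orbit of `x` at the times `jT` and label each sample by a ball of the cover containing
it. Two samples with the same label form a `(δ,T)`-cycle, so the increment of `g` between them is
below `-1/2`. Write `g(x,nT)` as the sum of the one-step increments `g(x·jT, T) ≤ M`. Cutting a
segment of the label word at the last occurrence of its first letter and recursing on the other
letters bounds every segment sum by `(k-1)M`. By pigeonhole some label occurs `q ≥ (n+1)/k`
times among the first `n+1` samples; between its first and last occurrence lie `q-1` returns,
each worth at most `-1/2`, the pieces before and after cost at most `(k-1)M` each, and the
leftover time `t - nT < T` at most `M`.
-/

open Finset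

def ReturnsDecrease {α : Type*} (w : ℕ → α) (b : ℕ → ℝ) (ε : ℝ) : Prop :=
  ∀ ⦃i j⦄, i < j → w i = w j → ∑ l ∈ Ico i j, b l ≤ -ε

namespace ReturnsDecrease

variable {α : Type*} {w : ℕ → α} {b : ℕ → ℝ} {ε M : ℝ}

theorem sum_Ico_nonpos (hw : ReturnsDecrease w b ε) (hε : 0 ≤ ε) {i j : ℕ} (hij : w i = w j) :
    ∑ l ∈ Ico i j, b l ≤ 0 := by
  rcases lt_or_ge i j with h | h
  · linarith [hw h hij]
  · simp [Ico_eq_empty_of_le h]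

theorem sum_Ico_le_neg_card_mul (hw : ReturnsDecrease w b ε) (hε : 0 ≤ ε) (F : Finset ℕ) :
    ∀ {i j : ℕ}, F ⊆ Ico i j → (∀ l ∈ F, w l = w j) → w i = w j →
      ∑ l ∈ Ico i j, b l ≤ -(#F * ε) := by
  induction F using Finset.induction_on_max with
  | empty =>
    intro i j _ _ hij
    simpa using hw.sum_Ico_nonpos hε hij
  | insert m F hlt ih =>
    intro i j hF hFw hij
    have hm : m ∈ Ico i j := hF (mem_insert_self m F)
    rw [mem_Ico] at hm
    have hFm : F ⊆ Ico i m := fun l hl =>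
      mem_Ico.2 ⟨(mem_Ico.1 (hF (mem_insert_of_mem hl))).1, hlt l hl⟩
    have hmj : w m = w j := hFw m (mem_insert_self m F)
    have hinit := ih hFm (fun l hl => (hFw l (mem_insert_of_mem hl)).trans hmj.symm)
      (hij.trans hmj.symm)
    have hlast := hw hm.2 hmj
    have hnot : m ∉ F := fun h => (hlt m h).false
    rw [← sum_Ico_consecutive b hm.1 hm.2.le, card_insert_of_notMem hnot]
    push_cast
    linarith

theorem sum_Ico_le_card_sub_one_mul (hw : ReturnsDecrease w b ε) (hε : 0 ≤ ε) (hM : 0 ≤ M)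
    (hb : ∀ l, b l ≤ M) (S : Finset α) :
    ∀ {i j : ℕ}, i ≤ j → (∀ l ∈ Icc i j, w l ∈ S) → ∑ l ∈ Ico i j, b l ≤ (#S - 1) * M := by
  induction S using Finset.strongInduction with
  | H S ih =>
  classical
  intro i j hij hS
  have hiS : w i ∈ S := hS i (left_mem_Icc.2 hij)
  have hne : {l ∈ Icc i j | w l = w i}.Nonempty := ⟨i, by simp [hij]⟩
  set p := max' _ hne
  obtain ⟨hp, hpw⟩ := mem_filter.1 (max'_mem _ hne)
  rw [mem_Icc] at hp
  have hhead : ∑ l ∈ Ico i p, b l ≤ 0 := hw.sum_Ico_nonpos hε hpw.symm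
  have hcard : (1 : ℝ) ≤ #S := by exact_mod_cast card_pos.2 ⟨_, hiS⟩
  rcases hp.2.eq_or_lt with hpj | hpj
  · rw [← hpj]
    nlinarith
  have htail : ∑ l ∈ Ico (p + 1) j, b l ≤ (#(S.erase (w i)) - 1) * M := by
    refine ih _ (erase_ssubset hiS) hpj fun l hl => ?_
    rw [mem_Icc] at hl
    have hl' : l ∈ Icc i j := mem_Icc.2 ⟨by omega, hl.2⟩
    refine mem_erase.2 ⟨fun hwl => ?_, hS l hl'⟩
    have := le_max' {l ∈ Icc i j | w l = w i} l (mem_filter.2 ⟨hl', hwl⟩)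
    omega
  rw [cast_card_erase_of_mem hiS] at htail
  rw [← sum_Ico_consecutive b hp.1 hpj.le, sum_eq_sum_Ico_succ_bot hpj]
  linarith [hb p]

theorem sum_range_le [Fintype α] (hw : ReturnsDecrease w b ε) (hε : 0 ≤ ε) (hM : 0 ≤ M)
    (hb : ∀ l, b l ≤ M) (n : ℕ) :
    ∑ l ∈ range n, b l ≤
      2 * (Fintype.card α - 1) * M - ((n + 1) / Fintype.card α - 1) * ε := by
  classical
  have hα : (0 : ℝ) < Fintype.card α := by
    exact_mod_cast Fintype.card_pos_iff.2 ⟨w 0⟩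
  obtain ⟨c, -, hc⟩ := exists_le_card_fiber_of_nsmul_le_card_of_maps_to
    (s := range (n + 1)) (f := w) (b := ((n : ℝ) + 1) / Fintype.card α)
    (fun _ _ => mem_univ _) (univ_nonempty_iff.2 ⟨w 0⟩)
    (by rw [card_univ, nsmul_eq_mul, card_range, mul_div_cancel₀ _ hα.ne']; push_cast; rfl)
  set F := {l ∈ range (n + 1) | w l = c}
  have hF : F.Nonempty := card_pos.1 <| by
    have : (0 : ℝ) < #F := lt_of_lt_of_le (by positivity) hc
    exact_mod_cast this
  obtain ⟨-, hpw⟩ := mem_filter.1 (min'_mem F hF)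
  obtain ⟨hq, hqw⟩ := mem_filter.1 (max'_mem F hF)
  rw [mem_range] at hq
  have hpq : F.min' hF ≤ F.max' hF := min'_le F _ (max'_mem F hF)
  have hhead := hw.sum_Ico_le_card_sub_one_mul hε hM hb univ (Nat.zero_le (F.min' hF))
    fun _ _ => mem_univ _
  have hmid := hw.sum_Ico_le_neg_card_mul hε (F.erase (F.max' hF))
    (fun l hl => mem_Ico.2 ⟨min'_le F l (mem_of_mem_erase hl),
      lt_of_le_of_ne (le_max' F l (mem_of_mem_erase hl)) (ne_of_mem_erase hl)⟩)
    (fun l hl => (mem_filter.1 (mem_of_mem_erase hl)).2.trans hqw.symm) (hpw.trans hqw.symm)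
  have htail := hw.sum_Ico_le_card_sub_one_mul hε hM hb univ (Nat.lt_succ_iff.1 hq)
    fun _ _ => mem_univ _
  rw [cast_card_erase_of_mem (max'_mem F hF)] at hmid
  rw [card_univ] at hhead htail
  rw [range_eq_Ico, ← sum_Ico_consecutive _ (Nat.zero_le _) (hpq.trans (Nat.lt_succ_iff.1 hq)),
    ← sum_Ico_consecutive _ hpq (Nat.lt_succ_iff.1 hq)]
  nlinarith [mul_le_mul_of_nonneg_right hc hε]

end ReturnsDecrease

section Cocycle

variable {X : Type*} {φ : X → ℝ → X} {g : X → ℝ → ℝ}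

theorem cocycle_zero (h0 : ∀ x, φ x 0 = x) (hcoc : ∀ x s t, g x (s + t) = g x s + g (φ x s) t)
    (x : X) : g x 0 = 0 := by
  have h := hcoc x 0 0
  rw [add_zero, h0] at h
  linarith

theorem cocycle_nat_mul (h0 : ∀ x, φ x 0 = x)
    (hcoc : ∀ x s t, g x (s + t) = g x s + g (φ x s) t) (x : X) (s : ℝ) (n : ℕ) :
    g x (n * s) = ∑ l ∈ range n, g (φ x (l * s)) s := by
  induction n with
  | zero => simpa using cocycle_zero h0 hcoc x
  | succ n ih => rw [sum_range_succ, ← ih, ← hcoc, Nat.cast_succ, add_one_mul]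

theorem sum_Ico_eq_cocycle (h0 : ∀ x, φ x 0 = x) (hadd : ∀ x s t, φ (φ x s) t = φ x (s + t))
    (hcoc : ∀ x s t, g x (s + t) = g x s + g (φ x s) t) (x : X) (s : ℝ) (i j : ℕ) :
    ∑ l ∈ Ico i j, g (φ x (l * s)) s = g (φ x (i * s)) ((j - i : ℕ) * s) := by
  rw [sum_Ico_eq_sum_range, cocycle_nat_mul h0 hcoc]
  refine sum_congr rfl fun l _ => ?_
  rw [hadd, Nat.cast_add, add_mul]

theorem returnsDecrease_itinerary [PseudoMetricSpace X] {α : Type*} (h0 : ∀ x, φ x 0 = x)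
    (hadd : ∀ x s t, φ (φ x s) t = φ x (s + t))
    (hcoc : ∀ x s t, g x (s + t) = g x s + g (φ x s) t) {T δ ε : ℝ} (hT : 0 ≤ T) {C : Set X}
    (hinv : ∀ x ∈ C, ∀ t : ℝ, φ x t ∈ C)
    (hcycle : ∀ x ∈ C, ∀ t : ℝ, T ≤ t → dist x (φ x t) < δ → g x t < -ε)
    (a : X → α) (ha : ∀ z z', a z = a z' → dist z z' < δ) {x : X} (hx : x ∈ C) :
    ReturnsDecrease (fun l => a (φ x (l * T))) (fun l => g (φ x (l * T)) T) ε := by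
  intro i j hij hret
  rw [sum_Ico_eq_cocycle h0 hadd hcoc x T i j]
  have hj : φ (φ x (i * T)) ((j - i : ℕ) * T) = φ x (j * T) := by
    rw [hadd, Nat.cast_sub hij.le]
    ring_nf
  refine (hcycle _ (hinv x hx _) _ ?_ ?_).le
  · exact le_mul_of_one_le_left hT (by exact_mod_cast Nat.le_sub_of_add_le' hij)
  · exact hj ▸ ha _ _ hret

theorem cocycle_le_sum_range_floor_add (h0 : ∀ x, φ x 0 = x)
    (hcoc : ∀ x s t, g x (s + t) = g x s + g (φ x s) t) {T M : ℝ} (hT : 0 < T)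
    (hgM : ∀ z s, 0 ≤ s → s ≤ T → g z s ≤ M) (x : X) {t : ℝ} (ht : 0 ≤ t) :
    g x t ≤ ∑ l ∈ range ⌊t / T⌋₊, g (φ x (l * T)) T + M := by
  set n := ⌊t / T⌋₊
  have hnt : n * T ≤ t := (le_div_iff₀ hT).1 (Nat.floor_le (div_nonneg ht hT.le))
  have htn : t < (n + 1) * T := (div_lt_iff₀ hT).1 (Nat.lt_floor_add_one _)
  have hsplit : g x t = g x (n * T) + g (φ x (n * T)) (t - n * T) := by
    rw [← hcoc, add_sub_cancel]
  rw [hsplit, cocycle_nat_mul h0 hcoc]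
  linarith [hgM (φ x (n * T)) (t - n * T) (by linarith) (by linarith)]

end Cocycle

theorem pigeonhole_decay_estimate_general {X : Type*} [MetricSpace X]
    (φ : X → ℝ → X)
    (h0 : ∀ x, φ x 0 = x) (hadd : ∀ x s t, φ (φ x s) t = φ x (s + t))
    (g : X → ℝ → ℝ)
    (hcoc : ∀ x s t, g x (s + t) = g x s + g (φ x s) t)
    (T δ : ℝ) (hT : 1 ≤ T)
    (C : Set X) (hinv : ∀ x ∈ C, ∀ t : ℝ, φ x t ∈ C)
    (hcycle : ∀ x ∈ C, ∀ t : ℝ, T ≤ t → dist x (φ x t) < δ → g x t < -(1 / 2))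
    (k : ℕ) (y : Fin k → X)
    (hcover : ∀ x : X, ∃ i : Fin k, dist x (y i) < δ / 2)
    (M : ℝ) (hM : ∀ x : X, ∀ t : ℝ, 0 ≤ t → t ≤ T → |g x t| ≤ M) :
    ∀ x ∈ C, ∀ t : ℝ, 0 ≤ t →
      g x t < (2 * (k : ℝ) - 1) * M + 1 / 2 - ((⌊t / T⌋ : ℝ) + 1 - k) / (2 * k) ∧
      g x t ≤ -(1 / (2 * (k : ℝ) * T)) * t + ((2 * (k : ℝ) - 1) * M + 1 / 2) := by
  intro x hx t ht
  choose a ha using hcover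
  have hk : (0 : ℝ) < k := by exact_mod_cast (a x).pos
  have hT0 : 0 < T := by linarith
  have hgM : ∀ z s, 0 ≤ s → s ≤ T → g z s ≤ M := fun z s hs hsT =>
    (le_abs_self _).trans (hM z s hs hsT)
  have hlabel : ∀ z z', a z = a z' → dist z z' < δ := fun z z' h => by
    linarith [dist_triangle_right z z' (y (a z)), h ▸ ha z', ha z]
  set n := ⌊t / T⌋₊
  have hword := (returnsDecrease_itinerary h0 hadd hcoc hT0.le hinv hcycle a hlabel hx).sum_range_le
    (by norm_num) ((abs_nonneg _).trans (hM x 0 le_rfl hT0.le)) (fun l => hgM _ T hT0.le le_rfl) n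
  rw [Fintype.card_fin] at hword
  have hbound : g x t ≤ (2 * k - 1) * M + 1 / 2 - (n + 1) / (2 * k) := by
    have hhalf : ((n + 1) / k - 1) * (1 / 2 : ℝ) = (n + 1) / (2 * k) - 1 / 2 := by field_simp
    linarith [cocycle_le_sum_range_floor_add h0 hcoc hT0 hgM x ht]
  rw [← natCast_floor_eq_intCast_floor (div_nonneg ht hT0.le)]
  constructor
  · have hshift : ((n : ℝ) + 1 - k) / (2 * k) = (n + 1) / (2 * k) - 1 / 2 := by field_simp
    linarith
  · have htn : t < (n + 1) * T := (div_lt_iff₀ hT0).1 (Nat.lt_floor_add_one _)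
    have hrate : 1 / (2 * k * T) * t ≤ (n + 1) / (2 * k) := by
      rw [one_div_mul_eq_div, div_le_div_iff₀ (by positivity) (by positivity)]
      nlinarith
    linarith

/-- The pigeonhole estimate: if `g x t < -1/2` along `(δ,T)`-cycles based in a
flow-invariant set `C`, the space is covered by `k` balls of radius `δ/2`, and `M`
bounds `|g|` on times in `[0,T]`, then for all `x ∈ C` and `t ≥ 0`,
`g x t < (2k-1)M + 1/2 - (⌊t/T⌋ + 1 - k)/(2k)`; consequently
`g x t ≤ -t/(2kT) + (2k-1)M + 1/2`. -/
theorem pigeonhole_decay_estimate {X : Type*} [MetricSpace X] [CompactSpace X]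
    (φ : X → ℝ → X) (hφ : Continuous fun p : X × ℝ => φ p.1 p.2)
    (h0 : ∀ x, φ x 0 = x) (hadd : ∀ x s t, φ (φ x s) t = φ x (s + t))
    (g : X → ℝ → ℝ) (hg : Continuous fun p : X × ℝ => g p.1 p.2)
    (hcoc : ∀ x s t, g x (s + t) = g x s + g (φ x s) t)
    (T δ : ℝ) (hT : 1 ≤ T) (hδ : 0 < δ)
    (C : Set X) (hinv : ∀ x ∈ C, ∀ t : ℝ, φ x t ∈ C)
    (hcycle : ∀ x ∈ C, ∀ t : ℝ, T ≤ t → dist x (φ x t) < δ → g x t < -(1 / 2))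
    (k : ℕ) (hk : 0 < k) (y : Fin k → X)
    (hcover : ∀ x : X, ∃ i : Fin k, dist x (y i) < δ / 2)
    (M : ℝ) (hM : ∀ x : X, ∀ t : ℝ, 0 ≤ t → t ≤ T → |g x t| ≤ M) :
    ∀ x ∈ C, ∀ t : ℝ, 0 ≤ t →
      g x t < (2 * (k : ℝ) - 1) * M + 1 / 2 - ((⌊t / T⌋ : ℝ) + 1 - k) / (2 * k) ∧
      g x t ≤ -(1 / (2 * (k : ℝ) * T)) * t + ((2 * (k : ℝ) - 1) * M + 1 / 2) :=
  pigeonhole_decay_estimate_general φ h0 hadd g hcoc T δ hT C hinv hcycle k y hcover M hM
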